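/- arXiv:2107.09778 — 4 statements merged into one kernel-verified Lean document; each statement's English description precedes it below -/
import Mathlib

section
/- If a compressor f : X → M is injective on X except for merging exactly two letters a ≠ b (i.e., f(a) = f(b) = m and f is injective elsewhere with fibers of size 1), then the compression penalty D(P₀‖P₁) − D(P̂₀‖P̂₁) equals (P₀(a)+P₀(b)) · D(q₀ ‖ q₁), where q_θ is the Bernoulli-type distribution (P_θ(a)/(P_θ(a)+P_θ(b)), P_θ(b)/(P_θ(a)+P_θ(b))). -/
open scoped BigOperators

/-- Pushforward of a distribution `P` on `X` under `f : X → M`. -/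
noncomputable def push {X M : Type*} [Fintype X] [DecidableEq M] (f : X → M) (P : X → ℝ)
    (m : M) : ℝ :=
  ∑ x, if f x = m then P x else 0

/-- KL divergence between finite distributions (convention `0 * log 0 = 0` holds in ℝ). -/
noncomputable def KL {X : Type*} [Fintype X] (P Q : X → ℝ) : ℝ :=
  ∑ x, P x * Real.log (P x / Q x)

/-- Cost of merging the pair `{a, b}`: `(P₀(a)+P₀(b)) · D(q₀ ‖ q₁)` where
`q_θ = (P_θ(a)/(P_θ(a)+P_θ(b)), P_θ(b)/(P_θ(a)+P_θ(b)))`. -/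
noncomputable def mergeCost {X : Type*} (P0 P1 : X → ℝ) (a b : X) : ℝ :=
  (P0 a + P0 b) *
    (P0 a / (P0 a + P0 b) * Real.log ((P0 a / (P0 a + P0 b)) / (P1 a / (P1 a + P1 b)))
      + P0 b / (P0 a + P0 b) * Real.log ((P0 b / (P0 a + P0 b)) / (P1 b / (P1 a + P1 b))))

/-- If `f` merges exactly the two letters `a ≠ b` and is injective elsewhere, the
compression penalty equals the merge cost of the pair `{a, b}`. -/
theorem penalty_single_merge {X M : Type*} [Fintype X] [Fintype M] [DecidableEq M]
    (f : X → M) (a b : X) (hab : a ≠ b) (hfab : f a = f b)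
    (hinj : ∀ x y, f x = f y → x = y ∨ ((x = a ∨ x = b) ∧ (y = a ∨ y = b)))
    (P0 P1 : X → ℝ)
    (h0 : ∀ x, 0 < P0 x) (h0s : ∑ x, P0 x = 1)
    (h1 : ∀ x, 0 < P1 x) (h1s : ∑ x, P1 x = 1) :
    KL P0 P1 - KL (push f P0) (push f P1) = mergeCost P0 P1 a b := by
  classical
  -- push at f x for x outside {a,b}
  have hpush_ne : ∀ (P : X → ℝ) (x : X), x ≠ a → x ≠ b → push f P (f x) = P x := by
    intro P x hxa hxb
    unfold push
    rw [Finset.sum_eq_single x]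
    · simp
    · intro y _ hy
      rw [if_neg]
      intro hfy
      rcases hinj y x hfy with h | ⟨_, hx⟩
      · exact hy h
      · rcases hx with h | h
        · exact hxa h
        · exact hxb h
    · intro h; exact absurd (Finset.mem_univ x) h
  -- push at f a
  have hpush_a : ∀ (P : X → ℝ), push f P (f a) = P a + P b := by
    intro P
    unfold push
    have hfil : (Finset.univ.filter (fun x => f x = f a)) = {a, b} := by
      ext x
      simp only [Finset.mem_filter, Finset.mem_univ, true_and, Finset.mem_insert,
        Finset.mem_singleton]
      constructor
      · intro hx
        rcases hinj x a hx with h | ⟨hx2, _⟩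
        · exact Or.inl h
        · exact hx2
      · rintro (rfl | rfl)
        · rfl
        · exact hfab.symm
    rw [← Finset.sum_filter, hfil, Finset.sum_pair hab]
  -- the set S
  set S : Finset X := Finset.univ.erase b with hS
  have haS : a ∈ S := Finset.mem_erase.mpr ⟨hab, Finset.mem_univ a⟩
  have hinjS : ∀ x ∈ S, ∀ y ∈ S, f x = f y → x = y := by
    intro x hx y hy hxy
    rcases hinj x y hxy with h | ⟨hx2, hy2⟩
    · exact h
    · have hxb := (Finset.mem_erase.mp hx).1
      have hyb := (Finset.mem_erase.mp hy).1
      rcases hx2 with rfl | rfl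
      · rcases hy2 with rfl | rfl
        · rfl
        · exact absurd rfl hyb
      · exact absurd rfl hxb
  -- KL of pushforwards as sum over S
  have hKLpush : KL (push f P0) (push f P1)
      = ∑ x ∈ S, push f P0 (f x) * Real.log (push f P0 (f x) / push f P1 (f x)) := by
    unfold KL
    rw [← Finset.sum_image (s := S) (g := f)
      (f := fun m => push f P0 m * Real.log (push f P0 m / push f P1 m)) hinjS]
    symm
    apply Finset.sum_subset (Finset.subset_univ _)
    intro m _ hm
    have hzero : push f P0 m = 0 := by
      unfold push
      apply Finset.sum_eq_zero
      intro x _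
      rw [if_neg]
      intro hx
      apply hm
      by_cases hxb : x = b
      · subst hxb
        exact Finset.mem_image.mpr ⟨a, haS, by rw [hfab, hx]⟩
      · exact Finset.mem_image.mpr ⟨x, Finset.mem_erase.mpr ⟨hxb, Finset.mem_univ x⟩, hx⟩
    rw [hzero]; ring
  -- split off a from both sums
  have hsplit1 : KL P0 P1 = P0 b * Real.log (P0 b / P1 b) + (P0 a * Real.log (P0 a / P1 a)
      + ∑ x ∈ S.erase a, P0 x * Real.log (P0 x / P1 x)) := by
    unfold KL
    rw [← Finset.add_sum_erase _ _ (Finset.mem_univ b), ← Finset.add_sum_erase _ _ haS]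
  have hsplit2 : ∑ x ∈ S, push f P0 (f x) * Real.log (push f P0 (f x) / push f P1 (f x))
      = (P0 a + P0 b) * Real.log ((P0 a + P0 b) / (P1 a + P1 b))
        + ∑ x ∈ S.erase a, P0 x * Real.log (P0 x / P1 x) := by
    rw [← Finset.add_sum_erase _ _ haS, hpush_a, hpush_a]
    congr 1
    apply Finset.sum_congr rfl
    intro x hx
    have hxa := (Finset.mem_erase.mp hx).1
    have hxb := (Finset.mem_erase.mp (Finset.mem_erase.mp hx).2).1
    rw [hpush_ne P0 x hxa hxb, hpush_ne P1 x hxa hxb]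
  rw [hKLpush, hsplit1, hsplit2]
  -- remaining algebra
  have h0a := h0 a; have h0b := h0 b; have h1a := h1 a; have h1b := h1 b
  have hs0 : (0:ℝ) < P0 a + P0 b := by linarith
  have hs1 : (0:ℝ) < P1 a + P1 b := by linarith
  unfold mergeCost
  have e1 : Real.log ((P0 a / (P0 a + P0 b)) / (P1 a / (P1 a + P1 b)))
      = Real.log (P0 a / P1 a) - Real.log ((P0 a + P0 b) / (P1 a + P1 b)) := by
    rw [div_div_div_comm]
    rw [Real.log_div (by positivity) (by positivity)]
  have e2 : Real.log ((P0 b / (P0 a + P0 b)) / (P1 b / (P1 a + P1 b)))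
      = Real.log (P0 b / P1 b) - Real.log ((P0 a + P0 b) / (P1 a + P1 b)) := by
    rw [div_div_div_comm]
    rw [Real.log_div (by positivity) (by positivity)]
  rw [e1, e2]
  field_simp
  ring
end

section
/- Conversely, merging two letters a ≠ b incurs zero compression penalty only if their likelihood ratios agree: if D(P̂₀‖P̂₁) = D(P₀‖P₁) for the compressor that merges exactly a and b, then P₀(a)·P₁(b) = P₀(b)·P₁(a). -/
open scoped BigOperators

lemma logsum_strict (p q r s : ℝ) (hp : 0 < p) (hq : 0 < q) (hr : 0 < r) (hs : 0 < s)
    (hne : p / r ≠ q / s) :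
    (p + q) * Real.log ((p + q) / (r + s)) < p * Real.log (p / r) + q * Real.log (q / s) := by
  have hrs : 0 < r + s := by linarith
  have key := Real.strictConvexOn_mul_log.2
    (Set.mem_Ici.2 (le_of_lt (div_pos hp hr))) (Set.mem_Ici.2 (le_of_lt (div_pos hq hs)))
    hne (div_pos hr hrs) (div_pos hs hrs)
    (by field_simp : r / (r + s) + s / (r + s) = 1)
  simp only [smul_eq_mul] at key
  have hx : r / (r + s) * (p / r) + s / (r + s) * (q / s) = (p + q) / (r + s) := by
    field_simp
  rw [hx] at key
  have := mul_lt_mul_of_pos_left key hrs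
  have e1 : (r + s) * ((p + q) / (r + s) * Real.log ((p + q) / (r + s)))
      = (p + q) * Real.log ((p + q) / (r + s)) := by field_simp
  have e2 : (r + s) * (r / (r + s) * (p / r * Real.log (p / r)) + s / (r + s) * (q / s * Real.log (q / s)))
      = p * Real.log (p / r) + q * Real.log (q / s) := by field_simp
  linarith [this, e1.symm ▸ this]

/-- Converse: merging two letters incurs zero penalty only if their likelihood ratios
agree. -/
theorem no_penalty_implies_equal_ratio {X M : Type*} [Fintype X] [Fintype M] [DecidableEq M]
    (f : X → M) (a b : X) (hab : a ≠ b) (hfab : f a = f b)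
    (hinj : ∀ x y, f x = f y → x = y ∨ ((x = a ∨ x = b) ∧ (y = a ∨ y = b)))
    (P0 P1 : X → ℝ)
    (h0 : ∀ x, 0 < P0 x) (h0s : ∑ x, P0 x = 1)
    (h1 : ∀ x, 0 < P1 x) (h1s : ∑ x, P1 x = 1)
    (heq : KL (push f P0) (push f P1) = KL P0 P1) :
    P0 a * P1 b = P0 b * P1 a := by
  classical
  have pushx : ∀ (P : X → ℝ) (x : X), x ≠ a → x ≠ b → push f P (f x) = P x := by
    intro P x hxa hxb
    unfold push
    have hpt : ∀ y : X, (if f y = f x then P y else 0) = (if y = x then P y else 0) := by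
      intro y
      by_cases h : f y = f x
      · rcases hinj y x h with h' | ⟨_, h2⟩
        · simp [h, h']
        · rcases h2 with h2 | h2 <;> exact absurd h2 (by assumption)
      · have : y ≠ x := fun e => h (by rw [e])
        simp [h, this]
    rw [Finset.sum_congr rfl (fun y _ => hpt y)]
    simp
  have pusha : ∀ (P : X → ℝ), push f P (f a) = P a + P b := by
    intro P
    unfold push
    have hpt : ∀ y : X, (if f y = f a then P y else 0)
        = (if y = a then P a else 0) + (if y = b then P b else 0) := by
      intro y
      by_cases h : f y = f a
      · rcases hinj y a h with h' | ⟨h1', _⟩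
        · simp [h', hab]
        · rcases h1' with h1' | h1' <;> subst h1'
          · simp [h, hab]
          · simp [h, hab.symm]
      · have hya : y ≠ a := fun e => h (by rw [e])
        have hyb : y ≠ b := fun e => h (by rw [e, ← hfab])
        simp [h, hya, hyb]
    rw [Finset.sum_congr rfl (fun y _ => hpt y), Finset.sum_add_distrib]
    simp
  -- restrict KL of pushforwards to the image of f
  set g : M → ℝ := fun m => push f P0 m * Real.log (push f P0 m / push f P1 m) with hg
  have hzero : ∀ m : M, m ∉ Finset.image f Finset.univ → g m = 0 := by
    intro m hm
    have : push f P0 m = 0 := by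
      unfold push
      apply Finset.sum_eq_zero
      intro x _
      have : f x ≠ m := fun e => hm (Finset.mem_image.2 ⟨x, Finset.mem_univ x, e⟩)
      simp [this]
    simp [hg, this]
  have hKLpush : KL (push f P0) (push f P1) = ∑ m ∈ Finset.image f Finset.univ, g m := by
    unfold KL
    rw [← Finset.sum_subset (Finset.subset_univ _) (fun m _ hm => hzero m hm)]
  -- the image equals the image of univ.erase b, where f is injective
  set S : Finset X := Finset.univ.erase b with hS
  have haS : a ∈ S := Finset.mem_erase.2 ⟨hab, Finset.mem_univ a⟩
  have himg : Finset.image f Finset.univ = Finset.image f S := by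
    apply Finset.Subset.antisymm
    · intro m hm
      rcases Finset.mem_image.1 hm with ⟨x, _, hx⟩
      by_cases hxb : x = b
      · exact Finset.mem_image.2 ⟨a, haS, by rw [hfab, ← hxb, hx]⟩
      · exact Finset.mem_image.2 ⟨x, Finset.mem_erase.2 ⟨hxb, Finset.mem_univ x⟩, hx⟩
    · exact Finset.image_subset_image (Finset.subset_univ _)
  have hinjS : ∀ x ∈ S, ∀ y ∈ S, f x = f y → x = y := by
    intro x hx y hy h
    rcases hinj x y h with h' | ⟨h1', h2'⟩
    · exact h'
    · have hxb := (Finset.mem_erase.1 hx).1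
      have hyb := (Finset.mem_erase.1 hy).1
      rcases h1' with h1' | h1'
      · rcases h2' with h2' | h2'
        · rw [h1', h2']
        · exact absurd h2' hyb
      · exact absurd h1' hxb
  have hsumS : ∑ m ∈ Finset.image f S, g m = ∑ x ∈ S, g (f x) :=
    Finset.sum_image hinjS
  -- split off a from S
  have hsplitS : ∑ x ∈ S, g (f x) = g (f a) + ∑ x ∈ S.erase a, g (f x) :=
    (Finset.add_sum_erase S _ haS).symm
  have hrest : ∀ x ∈ S.erase a, g (f x) = P0 x * Real.log (P0 x / P1 x) := by
    intro x hx
    have hxa := (Finset.mem_erase.1 hx).1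
    have hxb := (Finset.mem_erase.1 (Finset.mem_erase.1 hx).2).1
    simp [hg, pushx P0 x hxa hxb, pushx P1 x hxa hxb]
  -- split KL P0 P1
  have hKL : KL P0 P1 = P0 b * Real.log (P0 b / P1 b) + (P0 a * Real.log (P0 a / P1 a)
      + ∑ x ∈ S.erase a, P0 x * Real.log (P0 x / P1 x)) := by
    unfold KL
    rw [← Finset.add_sum_erase Finset.univ _ (Finset.mem_univ b),
        ← Finset.add_sum_erase (Finset.univ.erase b) _ haS]
  have hga : g (f a) = (P0 a + P0 b) * Real.log ((P0 a + P0 b) / (P1 a + P1 b)) := by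
    simp [hg, pusha P0, pusha P1]
  have hmain : (P0 a + P0 b) * Real.log ((P0 a + P0 b) / (P1 a + P1 b))
      = P0 a * Real.log (P0 a / P1 a) + P0 b * Real.log (P0 b / P1 b) := by
    have := heq
    rw [hKLpush, himg, hsumS, hsplitS, hga, hKL,
        Finset.sum_congr rfl hrest] at this
    linarith
  by_contra hne
  have hne' : P0 a / P1 a ≠ P0 b / P1 b := by
    intro h
    exact hne ((div_eq_div_iff (h1 a).ne' (h1 b).ne').1 h)
  have := logsum_strict (P0 a) (P0 b) (P1 a) (P1 b) (h0 a) (h0 b) (h1 a) (h1 b) hne'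
  linarith
end

section
/- Among all compressors from X to an alphabet of size |X| − 1 (which necessarily merge exactly one pair of letters), the one minimizing the compression penalty merges the pair {a,b} minimizing (P₀(a)+P₀(b)) · D(q₀^{a,b} ‖ q₁^{a,b}), where q_θ^{a,b} = (P_θ(a)/(P_θ(a)+P_θ(b)), P_θ(b)/(P_θ(a)+P_θ(b))). Equivalently, maximizing D(P̂₀‖P̂₁) over such compressors is equivalent to minimizing this merge cost over pairs. -/
open scoped BigOperators

lemma KL_push_eq {X M : Type*} [Fintype X] [Fintype M] [DecidableEq M]
    (f : X → M) (hfsurj : Function.Surjective f)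
    (a b : X) (hab : a ≠ b) (hfab : f a = f b)
    (hinjf : ∀ x y, f x = f y → x = y ∨ ((x = a ∨ x = b) ∧ (y = a ∨ y = b)))
    (P0 P1 : X → ℝ) (h0 : ∀ x, 0 < P0 x) (h1 : ∀ x, 0 < P1 x) :
    KL (push f P0) (push f P1) = KL P0 P1 - mergeCost P0 P1 a b := by
  classical
  have hpush : ∀ (P : X → ℝ) m,
      push f P m = ∑ x ∈ Finset.univ.filter (fun x => f x = m), P x :=
    fun P m => (Finset.sum_filter _ _).symm
  have hfib_a : Finset.univ.filter (fun x => f x = f a) = {a, b} := by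
    ext y
    simp only [Finset.mem_filter, Finset.mem_univ, true_and, Finset.mem_insert,
      Finset.mem_singleton]
    constructor
    · intro h
      rcases hinjf y a h with h | ⟨hy, _⟩
      · exact Or.inl h
      · exact hy
    · rintro (rfl | rfl)
      · rfl
      · exact hfab.symm
  have hfib_x : ∀ x, x ≠ a → x ≠ b →
      Finset.univ.filter (fun y => f y = f x) = {x} := by
    intro x hxa hxb
    ext y
    simp only [Finset.mem_filter, Finset.mem_univ, true_and, Finset.mem_singleton]
    constructor
    · intro h
      rcases hinjf y x h with h | ⟨_, hx⟩
      · exact h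
      · rcases hx with rfl | rfl
        · exact absurd rfl hxa
        · exact absurd rfl hxb
    · rintro rfl; rfl
  have hpa : ∀ P : X → ℝ, push f P (f a) = P a + P b := by
    intro P
    rw [hpush, hfib_a, Finset.sum_insert (by simp [hab]), Finset.sum_singleton]
  have hpx : ∀ (P : X → ℝ) x, x ≠ a → x ≠ b → push f P (f x) = P x := by
    intro P x hxa hxb
    rw [hpush, hfib_x x hxa hxb, Finset.sum_singleton]
  have himg : (Finset.univ.erase b).image f = Finset.univ := by
    apply Finset.eq_univ_of_forall
    intro m
    obtain ⟨x, rfl⟩ := hfsurj m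
    by_cases hx : x = b
    · subst hx
      exact Finset.mem_image.2 ⟨a, Finset.mem_erase.2 ⟨hab, Finset.mem_univ a⟩, hfab⟩
    · exact Finset.mem_image.2 ⟨x, Finset.mem_erase.2 ⟨hx, Finset.mem_univ x⟩, rfl⟩
  have hinj : ∀ x ∈ Finset.univ.erase b, ∀ y ∈ Finset.univ.erase b, f x = f y → x = y := by
    intro x hx y hy h
    rcases hinjf x y h with h | ⟨hx', hy'⟩
    · exact h
    · have hxb : x ≠ b := (Finset.mem_erase.1 hx).1
      have hyb : y ≠ b := (Finset.mem_erase.1 hy).1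
      rcases hx' with rfl | rfl
      · rcases hy' with rfl | rfl
        · rfl
        · exact absurd rfl hyb
      · exact absurd rfl hxb
  set F : ℝ → ℝ → ℝ := fun p q => p * Real.log (p / q) with hF
  have ha_mem : a ∈ Finset.univ.erase b := Finset.mem_erase.2 ⟨hab, Finset.mem_univ a⟩
  set S : Finset X := (Finset.univ.erase b).erase a with hS
  have hsplit1 : Finset.univ.erase b = insert a S := (Finset.insert_erase ha_mem).symm
  have hsplit2 : (Finset.univ : Finset X) = insert b (Finset.univ.erase b) :=
    (Finset.insert_erase (Finset.mem_univ b)).symm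
  have hKLpush : KL (push f P0) (push f P1)
      = F (P0 a + P0 b) (P1 a + P1 b) + ∑ x ∈ S, F (P0 x) (P1 x) := by
    have : KL (push f P0) (push f P1)
        = ∑ x ∈ Finset.univ.erase b, F (push f P0 (f x)) (push f P1 (f x)) := by
      rw [KL, ← himg, Finset.sum_image hinj]
    rw [this, hsplit1, Finset.sum_insert (by simp [hS])]
    congr 1
    · rw [hpa, hpa]
    · apply Finset.sum_congr rfl
      intro x hx
      have hxa : x ≠ a := (Finset.mem_erase.1 hx).1
      have hxb : x ≠ b := (Finset.mem_erase.1 (Finset.mem_erase.1 hx).2).1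
      rw [hpx _ _ hxa hxb, hpx _ _ hxa hxb]
  have hKL : KL P0 P1
      = F (P0 b) (P1 b) + F (P0 a) (P1 a) + ∑ x ∈ S, F (P0 x) (P1 x) := by
    rw [KL, hsplit2, Finset.sum_insert (by simp), hsplit1,
      Finset.sum_insert (by simp [hS]), ← add_assoc]
  rw [hKLpush, hKL]
  have hs0 : (0:ℝ) < P0 a + P0 b := by have := h0 a; have := h0 b; linarith
  have hs1 : (0:ℝ) < P1 a + P1 b := by have := h1 a; have := h1 b; linarith
  have key : mergeCost P0 P1 a b
      = F (P0 b) (P1 b) + F (P0 a) (P1 a) - F (P0 a + P0 b) (P1 a + P1 b) := by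
    have e : ∀ x : X, 0 < P0 x → 0 < P1 x →
        Real.log ((P0 x / (P0 a + P0 b)) / (P1 x / (P1 a + P1 b)))
          = Real.log (P0 x) - Real.log (P0 a + P0 b)
            - (Real.log (P1 x) - Real.log (P1 a + P1 b)) := by
      intro x hx0 hx1
      rw [Real.log_div (by positivity) (by positivity),
        Real.log_div (ne_of_gt hx0) (ne_of_gt hs0),
        Real.log_div (ne_of_gt hx1) (ne_of_gt hs1)]
    rw [mergeCost, e a (h0 a) (h1 a), e b (h0 b) (h1 b), hF]
    simp only
    rw [Real.log_div (ne_of_gt (h0 a)) (ne_of_gt (h1 a)),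
      Real.log_div (ne_of_gt (h0 b)) (ne_of_gt (h1 b)),
      Real.log_div (ne_of_gt hs0) (ne_of_gt hs1)]
    field_simp
    ring
  rw [key]
  ring

/-- For compressors onto `|X| - 1` symbols (which merge exactly one pair of letters),
maximizing the compressed divergence is equivalent to minimizing the merge cost:
one such compressor achieves at least the compressed divergence of another iff the merge
cost of its pair is at most the merge cost of the other's pair. -/
theorem optimal_one_step_merge {X M M' : Type*} [Fintype X] [Fintype M] [Fintype M']
    [DecidableEq M] [DecidableEq M']
    (hX : 2 ≤ Fintype.card X)
    (hM : Fintype.card M = Fintype.card X - 1) (hM' : Fintype.card M' = Fintype.card X - 1)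
    (f : X → M) (hfsurj : Function.Surjective f)
    (a b : X) (hab : a ≠ b) (hfab : f a = f b)
    (hinjf : ∀ x y, f x = f y → x = y ∨ ((x = a ∨ x = b) ∧ (y = a ∨ y = b)))
    (g : X → M') (hgsurj : Function.Surjective g)
    (c d : X) (hcd : c ≠ d) (hgcd : g c = g d)
    (hinjg : ∀ x y, g x = g y → x = y ∨ ((x = c ∨ x = d) ∧ (y = c ∨ y = d)))
    (P0 P1 : X → ℝ)
    (h0 : ∀ x, 0 < P0 x) (h0s : ∑ x, P0 x = 1)
    (h1 : ∀ x, 0 < P1 x) (h1s : ∑ x, P1 x = 1) :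
    KL (push g P0) (push g P1) ≤ KL (push f P0) (push f P1)
      ↔ mergeCost P0 P1 a b ≤ mergeCost P0 P1 c d := by
  rw [KL_push_eq f hfsurj a b hab hfab hinjf P0 P1 h0 h1,
    KL_push_eq g hgsurj c d hcd hgcd hinjg P0 P1 h0 h1]
  constructor <;> intro h <;> linarith
end

section
/- The merge cost of a pair is bounded above by the total mass times the log of the ratio spread: for distinct a, b, the penalty (P₀(a)+P₀(b))·D(q₀‖q₁) of merging a and b is at most (P₀(a)+P₀(b)) · |log((P₀(a)P₁(b))/(P₀(b)P₁(a)))|. -/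
open scoped BigOperators

lemma key_merge (pa pb qa qb : ℝ) (hpa : 0 < pa) (hpb : 0 < pb) (hqa : 0 < qa) (hqb : 0 < qb) :
    pa * Real.log ((pa / (pa + pb)) / (qa / (qa + qb)))
      + pb * Real.log ((pb / (pa + pb)) / (qb / (qa + qb)))
      ≤ (pa + pb) * |Real.log ((pa * qb) / (pb * qa))| := by
  have hs : 0 < pa + pb := by linarith
  have ht : 0 < qa + qb := by linarith
  set A := Real.log ((pa / (pa + pb)) / (qa / (qa + qb))) with hA
  set B := Real.log ((pb / (pa + pb)) / (qb / (qa + qb))) with hB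
  have hAB : Real.log ((pa * qb) / (pb * qa)) = A - B := by
    have e1 : A = Real.log pa - Real.log (pa + pb) - (Real.log qa - Real.log (qa + qb)) := by
      rw [hA, Real.log_div (by positivity) (by positivity), Real.log_div hpa.ne' hs.ne',
        Real.log_div hqa.ne' ht.ne']
    have e2 : B = Real.log pb - Real.log (pa + pb) - (Real.log qb - Real.log (qa + qb)) := by
      rw [hB, Real.log_div (by positivity) (by positivity), Real.log_div hpb.ne' hs.ne',
        Real.log_div hqb.ne' ht.ne']
    have e3 : Real.log ((pa * qb) / (pb * qa))
        = Real.log pa + Real.log qb - (Real.log pb + Real.log qa) := by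
      rw [Real.log_div (by positivity) (by positivity), Real.log_mul hpa.ne' hqb.ne',
        Real.log_mul hpb.ne' hqa.ne']
    rw [e1, e2, e3]; ring
  rcases le_total (qa * (pa + pb)) (pa * (qa + qb)) with h | h
  · -- A ≥ 0, B ≤ 0
    have hApos : 0 ≤ A := by
      apply Real.log_nonneg
      rw [one_le_div (by positivity), div_le_div_iff₀ ht hs]
      linarith
    have hBneg : B ≤ 0 := by
      apply Real.log_nonpos (by positivity)
      rw [div_le_one (by positivity), div_le_div_iff₀ hs ht]
      nlinarith
    rw [hAB, abs_of_nonneg (by linarith)]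
    nlinarith [mul_nonneg hpb.le hApos, mul_nonpos_of_nonneg_of_nonpos hpa.le hBneg,
      mul_nonpos_of_nonneg_of_nonpos hpb.le hBneg]
  · -- A ≤ 0, B ≥ 0
    have hAneg : A ≤ 0 := by
      apply Real.log_nonpos (by positivity)
      rw [div_le_one (by positivity), div_le_div_iff₀ hs ht]
      linarith
    have hBpos : 0 ≤ B := by
      apply Real.log_nonneg
      rw [one_le_div (by positivity), div_le_div_iff₀ ht hs]
      nlinarith
    rw [hAB, abs_of_nonpos (by linarith)]
    nlinarith [mul_nonneg hpa.le hBpos, mul_nonpos_of_nonneg_of_nonpos hpa.le hAneg,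
      mul_nonpos_of_nonneg_of_nonpos hpb.le hAneg]

/-- The merge cost is bounded by the total mass times the log of the ratio spread. -/
theorem mergeCost_le {X : Type*} [Fintype X]
    (P0 P1 : X → ℝ)
    (h0 : ∀ x, 0 < P0 x) (h0s : ∑ x, P0 x = 1)
    (h1 : ∀ x, 0 < P1 x) (h1s : ∑ x, P1 x = 1)
    (a b : X) (hab : a ≠ b) :
    mergeCost P0 P1 a b
      ≤ (P0 a + P0 b) * |Real.log ((P0 a * P1 b) / (P0 b * P1 a))| := by
  have hs : 0 < P0 a + P0 b := by have := h0 a; have := h0 b; linarith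
  have heq : mergeCost P0 P1 a b =
      P0 a * Real.log ((P0 a / (P0 a + P0 b)) / (P1 a / (P1 a + P1 b)))
        + P0 b * Real.log ((P0 b / (P0 a + P0 b)) / (P1 b / (P1 a + P1 b))) := by
    unfold mergeCost
    field_simp
  rw [heq]
  exact key_merge (P0 a) (P0 b) (P1 a) (P1 b) (h0 a) (h0 b) (h1 a) (h1 b)
end
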